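/- arXiv:2305.17482 — 3 statements merged into one kernel-verified Lean document; each statement's English description precedes it below -/
import Mathlib

section
/- Let R ∈ ℝ^{b×n} be an AMS sketch matrix and h ∈ ℝⁿ a fixed vector. Then for every coordinate i, E[((RᵀRh)_i)²] ≤ h_i² + ‖h‖₂²/b. -/
open MeasureTheory ProbabilityTheory Real Matrix

/-!
Write `Sᵢ = R_{ij} (Rᵢ ⬝ h)` for the contribution of row `i`, so that `(RᵀRh)_j = ∑ᵢ Sᵢ`.
Since `R_{ij}² = 1/b` and distinct entries of a row are uncorrelated, `E[Sᵢ] = h_j / b` and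
`E[Sᵢ²] = ‖h‖² / b²`. The `Sᵢ` are independent, so
`E[(∑ᵢ Sᵢ)²] = ∑ᵢ Var Sᵢ + (∑ᵢ E Sᵢ)² ≤ ∑ᵢ E[Sᵢ²] + (∑ᵢ E Sᵢ)² = ‖h‖² / b + h_j²`.
-/

theorem Matrix.transpose_mul_self_mulVec_apply {m n α : Type*} [Fintype m] [Fintype n]
    [CommSemiring α] (A : Matrix m n α) (h : n → α) (j : n) :
    ((Aᵀ * A) *ᵥ h) j = ∑ i, A i j * (A i ⬝ᵥ h) := by
  rw [← mulVec_mulVec, mulVec_transpose, vecMul, dotProduct]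
  exact Finset.sum_congr rfl fun i _ => mul_comm _ _

section

variable {Ω : Type*} [MeasurableSpace Ω] {μ : Measure Ω}

theorem integral_sum_sq_le_of_pairwise_indepFun [IsProbabilityMeasure μ] {ι : Type*} [Fintype ι]
    {S : ι → Ω → ℝ} (hS : ∀ i, MemLp (S i) 2 μ) (hind : Pairwise fun i j => S i ⟂ᵢ[μ] S j) :
    ∫ ω, (∑ i, S i ω) ^ 2 ∂μ ≤ ∑ i, ∫ ω, S i ω ^ 2 ∂μ + (∑ i, ∫ ω, S i ω ∂μ) ^ 2 := by
  have hsum : MemLp (∑ i, S i) 2 μ := memLp_finsetSum' _ fun i _ => hS i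
  have hvar : Var[∑ i, S i; μ] ≤ ∑ i, ∫ ω, S i ω ^ 2 ∂μ := by
    rw [IndepFun.variance_sum (fun i _ => hS i) fun i _ j _ hij => hind hij]
    exact Finset.sum_le_sum fun i _ => variance_le_expectation_sq (hS i).1
  have hmean : ∫ ω, ∑ i, S i ω ∂μ = ∑ i, ∫ ω, S i ω ∂μ :=
    integral_finsetSum _ fun i _ => (hS i).integrable one_le_two
  rw [variance_eq_sub hsum] at hvar
  simp only [Finset.sum_apply, Pi.pow_apply] at hvar
  rw [← hmean]
  linarith

theorem integral_mul_eq_zero_of_measure_eq_eq_half [IsProbabilityMeasure μ] {X Y : Ω → ℝ}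
    {c : ℝ} (hX : Measurable X) (hY : Measurable Y) (hXc : ∀ ω, X ω = c ∨ X ω = -c)
    (hYc : ∀ ω, Y ω = c ∨ Y ω = -c) (hXY : μ {ω | X ω = Y ω} = 1 / 2) :
    ∫ ω, X ω * Y ω ∂μ = 0 := by
  have hE : MeasurableSet {ω | X ω = Y ω} := measurableSet_eq_fun hX hY
  have hXY_eq : ∀ ω, X ω * Y ω = {ω | X ω = Y ω}.indicator (fun _ => 2 * c ^ 2) ω - c ^ 2 := by
    intro ω
    by_cases hω : X ω = Y ω
    · rw [Set.indicator_of_mem (show ω ∈ {ω | X ω = Y ω} from hω), ← hω]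
      rcases hXc ω with h | h <;> rw [h] <;> ring
    · rw [Set.indicator_of_notMem (show ω ∉ {ω | X ω = Y ω} from hω)]
      rcases hXc ω with h | h <;> rcases hYc ω with h' | h' <;> rw [h, h'] at hω ⊢ <;>
        first | exact absurd rfl hω | ring
  simp_rw [hXY_eq]
  rw [integral_sub ((integrable_const _).indicator hE) (integrable_const _),
    integral_indicator_const _ hE, integral_const, measureReal_def, hXY, probReal_univ]
  norm_num
  ring

structure IsPairwiseUniformSigns {ι : Type*} (μ : Measure Ω) (c : ℝ) (X : Ω → ι → ℝ) :
    Prop where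
  measurable : Measurable X
  apply_eq_or_eq_neg : ∀ ω l, X ω l = c ∨ X ω l = -c
  measure_eq : ∀ s : Finset ι, s.card ≤ 2 → ∀ ε : ι → ℝ, (∀ l ∈ s, ε l = c ∨ ε l = -c) →
    μ {ω | ∀ l ∈ s, X ω l = ε l} = (1 / 2 : ENNReal) ^ s.card

namespace IsPairwiseUniformSigns

variable {ι : Type*} {X : Ω → ι → ℝ} {c : ℝ}

theorem measure_apply_eq_apply (hX : IsPairwiseUniformSigns μ c X) (hc : c ≠ 0) {l l' : ι}
    (hll' : l ≠ l') : μ {ω | X ω l = X ω l'} = 1 / 2 := by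
  classical
  have hpair : ∀ a, (a = c ∨ a = -c) → μ {ω | X ω l = a ∧ X ω l' = a} = (1 / 2) ^ 2 := by
    intro a ha
    simpa [Finset.card_pair hll'] using
      hX.measure_eq {l, l'} Finset.card_le_two (fun _ => a) fun _ _ => ha
  have hsplit : {ω | X ω l = X ω l'} =
      {ω | X ω l = c ∧ X ω l' = c} ∪ {ω | X ω l = -c ∧ X ω l' = -c} := by
    ext ω
    rcases hX.apply_eq_or_eq_neg ω l with h | h <;>
      rcases hX.apply_eq_or_eq_neg ω l' with h' | h' <;> simp [h, h', eq_comm]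
  have hdisj : Disjoint {ω | X ω l = c ∧ X ω l' = c} {ω | X ω l = -c ∧ X ω l' = -c} :=
    Set.disjoint_left.2 fun ω h h' => hc (by linarith [h.1, h'.1])
  have hmeas : MeasurableSet {ω | X ω l = -c ∧ X ω l' = -c} := by
    have := hX.measurable
    measurability
  rw [hsplit, measure_union hdisj hmeas, hpair c (.inl rfl), hpair (-c) (.inr rfl), ← two_mul,
    pow_two, ← mul_assoc, one_div, ENNReal.mul_inv_cancel two_ne_zero ENNReal.ofNat_ne_top,
    one_mul]

variable [IsProbabilityMeasure μ]

theorem integrable_apply_mul_apply (hX : IsPairwiseUniformSigns μ c X) (l l' : ι) :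
    Integrable (fun ω => X ω l * X ω l') μ := by
  have := hX.measurable
  refine .of_bound (by fun_prop) (|c| * |c|) (ae_of_all _ fun ω => ?_)
  rw [norm_mul, Real.norm_eq_abs, Real.norm_eq_abs, abs_eq_abs.2 (hX.apply_eq_or_eq_neg ω l),
    abs_eq_abs.2 (hX.apply_eq_or_eq_neg ω l')]

theorem integral_apply_mul_apply [DecidableEq ι] (hX : IsPairwiseUniformSigns μ c X)
    (hc : c ≠ 0) (l l' : ι) : ∫ ω, X ω l * X ω l' ∂μ = if l = l' then c ^ 2 else 0 := by
  have := hX.measurable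
  split_ifs with hll'
  · subst hll'
    simp_rw [← sq, sq_eq_sq_iff_eq_or_eq_neg.2 (hX.apply_eq_or_eq_neg _ l), integral_const,
      probReal_univ, one_smul]
  · exact integral_mul_eq_zero_of_measure_eq_eq_half (by fun_prop) (by fun_prop)
      (hX.apply_eq_or_eq_neg · l) (hX.apply_eq_or_eq_neg · l') (hX.measure_apply_eq_apply hc hll')

variable [Fintype ι]

theorem integral_dotProduct_sq (hX : IsPairwiseUniformSigns μ c X) (hc : c ≠ 0) (h : ι → ℝ) :
    ∫ ω, (X ω ⬝ᵥ h) ^ 2 ∂μ = c ^ 2 * ∑ l, h l ^ 2 := by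
  classical
  have hexpand : ∀ ω, (X ω ⬝ᵥ h) ^ 2 = ∑ l, ∑ l', X ω l * X ω l' * (h l * h l') := by
    intro ω
    rw [dotProduct, sq, Finset.sum_mul_sum]
    exact Finset.sum_congr rfl fun _ _ => Finset.sum_congr rfl fun _ _ => by ring
  simp_rw [hexpand]
  rw [integral_finsetSum _ fun l _ => integrable_finsetSum _ fun l' _ =>
    (hX.integrable_apply_mul_apply l l').mul_const _]
  simp_rw [integral_finsetSum _ fun l' _ => (hX.integrable_apply_mul_apply _ l').mul_const _,
    integral_mul_const, hX.integral_apply_mul_apply hc, ite_mul, zero_mul, Finset.sum_ite_eq,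
    Finset.mem_univ, if_true, Finset.mul_sum, sq]

theorem integral_apply_mul_dotProduct (hX : IsPairwiseUniformSigns μ c X) (hc : c ≠ 0)
    (h : ι → ℝ) (j : ι) : ∫ ω, X ω j * (X ω ⬝ᵥ h) ∂μ = c ^ 2 * h j := by
  classical
  simp_rw [dotProduct, Finset.mul_sum, ← mul_assoc]
  rw [integral_finsetSum _ fun l _ => (hX.integrable_apply_mul_apply j l).mul_const _]
  simp_rw [integral_mul_const, hX.integral_apply_mul_apply hc, ite_mul, zero_mul,
    Finset.sum_ite_eq, Finset.mem_univ, if_true]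

theorem integral_apply_mul_dotProduct_sq (hX : IsPairwiseUniformSigns μ c X) (hc : c ≠ 0)
    (h : ι → ℝ) (j : ι) :
    ∫ ω, (X ω j * (X ω ⬝ᵥ h)) ^ 2 ∂μ = c ^ 2 * (c ^ 2 * ∑ l, h l ^ 2) := by
  simp_rw [mul_pow, sq_eq_sq_iff_eq_or_eq_neg.2 (hX.apply_eq_or_eq_neg _ j), integral_const_mul,
    hX.integral_dotProduct_sq hc]

theorem memLp_apply_mul_dotProduct (hX : IsPairwiseUniformSigns μ c X) (h : ι → ℝ) (j : ι) :
    MemLp (fun ω => X ω j * (X ω ⬝ᵥ h)) 2 μ := by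
  have := hX.measurable
  refine .of_bound (by fun_prop) (∑ l, |c| * |c| * |h l|) (ae_of_all _ fun ω => ?_)
  rw [Real.norm_eq_abs, dotProduct, Finset.mul_sum]
  refine (Finset.abs_sum_le_sum_abs _ _).trans_eq (Finset.sum_congr rfl fun l _ => ?_)
  rw [← mul_assoc, abs_mul, abs_mul, abs_eq_abs.2 (hX.apply_eq_or_eq_neg ω j),
    abs_eq_abs.2 (hX.apply_eq_or_eq_neg ω l)]

end IsPairwiseUniformSigns

end
/-- For an AMS sketch matrix `R ∈ ℝ^{b×n}` (rows are independent hash functions drawn from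
a 4-wise independent family mapping `[n] → {−1/√b, +1/√b}`) and a fixed vector `h ∈ ℝⁿ`,
for every coordinate `i` we have `E[((RᵀRh)ᵢ)²] ≤ hᵢ² + ‖h‖₂²/b`. -/
theorem ams_sketch_second_moment {Ω : Type*} [MeasurableSpace Ω] (μ : Measure Ω)
    [IsProbabilityMeasure μ] (b n : ℕ) (hb : 0 < b)
    (R : Ω → Fin b → Fin n → ℝ)
    (hmeas : ∀ i j, Measurable fun ω => R ω i j)
    -- entries take values in {−1/√b, +1/√b}
    (hval : ∀ ω i j, R ω i j = 1 / Real.sqrt b ∨ R ω i j = -(1 / Real.sqrt b))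
    -- the `b` rows (hash functions) are independent
    (hrows : iIndepFun (fun i ω => R ω i) μ)
    -- each row is drawn from a 4-wise independent hash family: any at most 4 entries of a
    -- row are jointly uniform over {−1/√b, +1/√b}
    (h4wise : ∀ (i : Fin b) (s : Finset (Fin n)), s.card ≤ 4 →
      ∀ ε : Fin n → ℝ, (∀ j ∈ s, ε j = 1 / Real.sqrt b ∨ ε j = -(1 / Real.sqrt b)) →
        μ {ω | ∀ j ∈ s, R ω i j = ε j} = (1 / 2 : ENNReal) ^ s.card)
    (h : Fin n → ℝ) :
    ∀ j : Fin n,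
      ∫ ω, ((((Matrix.of (R ω))ᵀ * Matrix.of (R ω)) *ᵥ h) j) ^ 2 ∂μ ≤
        h j ^ 2 + (∑ l, h l ^ 2) / b := by
  intro j
  set c : ℝ := 1 / Real.sqrt b
  have hb' : (b : ℝ) ≠ 0 := Nat.cast_ne_zero.2 hb.ne'
  have hc2 : c ^ 2 = 1 / b := by rw [div_pow, one_pow, Real.sq_sqrt (Nat.cast_nonneg b)]
  have hc : c ≠ 0 := by positivity
  have hrow : ∀ i, IsPairwiseUniformSigns μ c (fun ω => R ω i) := fun i =>
    ⟨measurable_pi_lambda _ (hmeas i), fun ω => hval ω i,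
      fun s hs => h4wise i s (hs.trans (by norm_num))⟩
  set S : Fin b → Ω → ℝ := fun i ω => R ω i j * (R ω i ⬝ᵥ h)
  have hind : Pairwise fun i i' => S i ⟂ᵢ[μ] S i' := fun i i' hii' =>
    (hrows.comp (fun _ v => v j * (v ⬝ᵥ h)) fun _ => by fun_prop).indepFun hii'
  calc ∫ ω, ((((Matrix.of (R ω))ᵀ * Matrix.of (R ω)) *ᵥ h) j) ^ 2 ∂μ
      = ∫ ω, (∑ i, S i ω) ^ 2 ∂μ := by simp_rw [transpose_mul_self_mulVec_apply]; rfl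
    _ ≤ ∑ i, ∫ ω, S i ω ^ 2 ∂μ + (∑ i, ∫ ω, S i ω ∂μ) ^ 2 :=
      integral_sum_sq_le_of_pairwise_indepFun (fun i => (hrow i).memLp_apply_mul_dotProduct h j)
        hind
    _ = b * (c ^ 2 * (c ^ 2 * ∑ l, h l ^ 2)) + (b * (c ^ 2 * h j)) ^ 2 := by
      simp [S, (hrow _).integral_apply_mul_dotProduct_sq hc,
        (hrow _).integral_apply_mul_dotProduct hc]
    _ = h j ^ 2 + (∑ l, h l ^ 2) / b := by
      rw [hc2]
      field_simp
      ring
end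

section
/- Let φ be a ν-self-concordant barrier on an open convex domain. Then for any x, y in dom φ, ⟨∇φ(x), y − x⟩ ≤ ν. -/
open Real

variable {n : ℕ}

/-- The Hessian quadratic form `u ↦ ∇²φ(x)[u,u]`. -/
noncomputable def hessQF (φ : EuclideanSpace ℝ (Fin n) → ℝ)
    (x u : EuclideanSpace ℝ (Fin n)) : ℝ :=
  iteratedFDeriv ℝ 2 φ x ![u, u]

/-- The third-derivative cubic form `u ↦ ∇³φ(x)[u,u,u]`. -/
noncomputable def thirdCF (φ : EuclideanSpace ℝ (Fin n) → ℝ)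
    (x u : EuclideanSpace ℝ (Fin n)) : ℝ :=
  iteratedFDeriv ℝ 3 φ x ![u, u, u]

open Set

/-!
Restrict to the segment: `f t = ⟨∇φ(x + t(y - x)), y - x⟩` satisfies `f² ≤ ν f'` on `[0, 1]`.
If `f 0 > 0`, then `f` is increasing and positive, and `-1/f t - t/ν` is nondecreasing,
so `1/f 0 ≥ 1/f 1 + 1/ν ≥ 1/ν`, i.e. `f 0 ≤ ν`.
-/

lemma monotoneOn_Icc_of_hasDerivAt_nonneg {f f' : ℝ → ℝ} {a b : ℝ}
    (hf : ∀ t ∈ Icc a b, HasDerivAt f (f' t) t) (hf' : ∀ t ∈ Icc a b, 0 ≤ f' t) :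
    MonotoneOn f (Icc a b) :=
  monotoneOn_of_hasDerivWithinAt_nonneg (convex_Icc a b)
    (fun t ht => (hf t ht).continuousAt.continuousWithinAt)
    (fun t ht => (hf t (interior_subset ht)).hasDerivWithinAt)
    (fun t ht => hf' t (interior_subset ht))

lemma mul_sub_le_of_sq_le_mul_deriv {f f' : ℝ → ℝ} {a b ν : ℝ} (hab : a ≤ b) (hν : 0 < ν)
    (hf : ∀ t ∈ Icc a b, HasDerivAt f (f' t) t) (hric : ∀ t ∈ Icc a b, f t ^ 2 ≤ ν * f' t) :
    f a * (b - a) ≤ ν := by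
  rcases le_or_gt (f a) 0 with hfa | hfa
  · nlinarith
  have hf'_nonneg : ∀ t ∈ Icc a b, 0 ≤ f' t := fun t ht =>
    nonneg_of_mul_nonneg_right ((sq_nonneg _).trans (hric t ht)) hν
  have hf_pos : ∀ t ∈ Icc a b, 0 < f t := fun t ht =>
    hfa.trans_le (monotoneOn_Icc_of_hasDerivAt_nonneg hf hf'_nonneg (left_mem_Icc.2 hab) ht ht.1)
  have hg : ∀ t ∈ Icc a b,
      HasDerivAt (fun s => -(f s)⁻¹ - s * ν⁻¹) (f' t / f t ^ 2 - ν⁻¹) t := fun t ht =>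
    (((hf t ht).inv (hf_pos t ht).ne').neg.sub ((hasDerivAt_id t).mul_const ν⁻¹)).congr_deriv
      (by ring)
  have hg'_nonneg : ∀ t ∈ Icc a b, 0 ≤ f' t / f t ^ 2 - ν⁻¹ := fun t ht => by
    have hft := pow_pos (hf_pos t ht) 2
    rw [sub_nonneg, inv_le_iff_one_le_mul₀ hν, div_mul_eq_mul_div, le_div_iff₀ hft]
    linarith [hric t ht, mul_comm ν (f' t)]
  have hgab := monotoneOn_Icc_of_hasDerivAt_nonneg hg hg'_nonneg (left_mem_Icc.2 hab)
    (right_mem_Icc.2 hab) hab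
  have hfb := inv_pos.2 (hf_pos b (right_mem_Icc.2 hab))
  have hgap : (b - a) * ν⁻¹ ≤ (f a)⁻¹ := by simp only at hgab; linarith
  calc f a * (b - a) = f a * ((b - a) * ν⁻¹) * ν := by field_simp
    _ ≤ f a * (f a)⁻¹ * ν := by gcongr
    _ = ν := by field_simp

lemma hasDerivAt_fderiv_apply_add_smul {E : Type*} [NormedAddCommGroup E] [NormedSpace ℝ E]
    {φ : E → ℝ} {x u : E} {t : ℝ} (hφ : ContDiffAt ℝ 2 φ (x + t • u)) :
    HasDerivAt (fun s : ℝ => fderiv ℝ φ (x + s • u) u)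
      (iteratedFDeriv ℝ 2 φ (x + t • u) ![u, u]) t := by
  have hline : HasDerivAt (fun s : ℝ => x + s • u) u t := by
    simpa using ((hasDerivAt_id t).smul_const u).const_add x
  have hD : DifferentiableAt ℝ (fderiv ℝ φ) (x + t • u) :=
    (hφ.fderiv_right (m := 1) le_rfl).differentiableAt one_ne_zero
  have := ((ContinuousLinearMap.apply ℝ ℝ u).hasFDerivAt.comp _ hD.hasFDerivAt).comp_hasDerivAt
    t hline
  rw [iteratedFDeriv_two_apply]
  exact this

theorem barrier_grad_inner_le_nu_general
    (K : Set (EuclideanSpace ℝ (Fin n))) (hK : IsOpen K) (hconv : Convex ℝ K)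
    (φ : EuclideanSpace ℝ (Fin n) → ℝ) (hsmooth : ContDiffOn ℝ 3 φ K)
    (ν : ℝ) (hν : 1 ≤ ν)
    (hbarrier : ∀ x ∈ K, ∀ u,
      (inner ℝ (gradient φ x) u : ℝ) ^ 2 ≤ ν * hessQF φ x u) :
    ∀ x ∈ K, ∀ y ∈ K, (inner ℝ (gradient φ x) (y - x) : ℝ) ≤ ν := by
  intro x hx y hy
  have hseg : ∀ t ∈ Icc (0 : ℝ) 1, x + t • (y - x) ∈ K := fun t ht =>
    hconv.add_smul_sub_mem hx hy ht
  have hderiv : ∀ t ∈ Icc (0 : ℝ) 1,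
      HasDerivAt (fun s : ℝ => fderiv ℝ φ (x + s • (y - x)) (y - x))
        (hessQF φ (x + t • (y - x)) (y - x)) t := fun t ht =>
    hasDerivAt_fderiv_apply_add_smul
      ((hsmooth.contDiffAt (hK.mem_nhds (hseg t ht))).of_le (by norm_num))
  have hric : ∀ t ∈ Icc (0 : ℝ) 1, fderiv ℝ φ (x + t • (y - x)) (y - x) ^ 2
      ≤ ν * hessQF φ (x + t • (y - x)) (y - x) := fun t ht => by
    simpa using hbarrier _ (hseg t ht) (y - x)
  simpa using mul_sub_le_of_sq_le_mul_deriv zero_le_one (by linarith) hderiv hric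

/-- If `φ` is a `ν`-self-concordant barrier on an open convex domain `K`, then for all
`x, y ∈ K`, `⟨∇φ(x), y − x⟩ ≤ ν`. -/
theorem barrier_grad_inner_le_nu
    (K : Set (EuclideanSpace ℝ (Fin n))) (hK : IsOpen K) (hconv : Convex ℝ K)
    (φ : EuclideanSpace ℝ (Fin n) → ℝ) (hsmooth : ContDiffOn ℝ 3 φ K)
    (ν : ℝ) (hν : 1 ≤ ν)
    (hconvex : ConvexOn ℝ K φ)
    (hsc : ∀ x ∈ K, ∀ u, |thirdCF φ x u| ≤ 2 * (hessQF φ x u) ^ ((3 : ℝ) / 2))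
    (hbarrier : ∀ x ∈ K, ∀ u,
      (inner ℝ (gradient φ x) u : ℝ) ^ 2 ≤ ν * hessQF φ x u) :
    ∀ x ∈ K, ∀ y ∈ K, (inner ℝ (gradient φ x) (y - x) : ℝ) ≤ ν :=
  barrier_grad_inner_le_nu_general K hK hconv φ hsmooth ν hν hbarrier
end

section
/- Let V ∈ ℝ^{n×n} be symmetric positive definite, H ∈ ℝ^{n×n} symmetric positive definite with (1−α)H⁻¹ ⪯ V ⪯ (1+α)H⁻¹ for α ≤ 1/10000, let P̃ be any matrix such that I − P̃ is an orthogonal projection, and let h ∈ ℝⁿ. Then hᵀV^{1/2}(I−P̃)V^{1/2} H V^{1/2}(I−P̃)V^{1/2}h ≤ 2·hᵀVh. -/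
open Matrix

open scoped ComplexOrder

/-!
Write `S = V^{1/2}`, `T = H^{1/2}` and `Q = I − P̃`. The left-hand side is `‖T S Q S h‖²`.
Conjugating `V ⪯ (1+α)H⁻¹` by `T` gives `T V T ⪯ (1+α) I`, i.e. `‖(T S)ᵀ‖² ≤ 1 + α`, and a
matrix and its transpose have the same operator norm, so `‖T S‖² ≤ 1 + α`. Since `Q` is an
orthogonal projection, `‖Q S h‖ ≤ ‖S h‖`, and `‖S h‖² = hᵀ V h`; finally `1 + α ≤ 2`.
-/

noncomputable def Matrix.PosSemidef.sqrt {n 𝕜 : Type*} [Fintype n] [DecidableEq n] [RCLike 𝕜]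
    {A : Matrix n n 𝕜} (hA : A.PosSemidef) : Matrix n n 𝕜 :=
  hA.1.eigenvectorUnitary.1 * diagonal ((↑) ∘ (√·) ∘ hA.1.eigenvalues) *
    (star hA.1.eigenvectorUnitary : Matrix n n 𝕜)

namespace Matrix

section Sqrt

variable {n 𝕜 : Type*} [Fintype n] [DecidableEq n] [RCLike 𝕜] {A : Matrix n n 𝕜}

lemma PosSemidef.isHermitian_sqrt (hA : A.PosSemidef) : hA.sqrt.IsHermitian := by
  unfold PosSemidef.sqrt
  rw [star_eq_conjTranspose]
  apply isHermitian_mul_mul_conjTranspose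
  apply isHermitian_diagonal_of_self_adjoint
  ext i
  simp

lemma PosSemidef.sqrt_mul_self (hA : A.PosSemidef) : hA.sqrt * hA.sqrt = A := by
  unfold PosSemidef.sqrt
  have hD : diagonal ((↑) ∘ (√·) ∘ hA.1.eigenvalues) * diagonal ((↑) ∘ (√·) ∘ hA.1.eigenvalues)
      = diagonal (RCLike.ofReal ∘ hA.1.eigenvalues : n → 𝕜) := by
    rw [diagonal_mul_diagonal]
    congr 1
    funext i
    simp only [Function.comp_apply]
    rw [← RCLike.ofReal_mul, Real.mul_self_sqrt (hA.eigenvalues_nonneg i)]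
  conv_rhs => rw [hA.1.spectral_theorem, Unitary.conjStarAlgAut_apply, ← hD]
  simp only [Matrix.mul_assoc]
  rw [← Matrix.mul_assoc (star _ : Matrix n n 𝕜) _ _,
    Unitary.coe_star_mul_self hA.1.eigenvectorUnitary, Matrix.one_mul]

end Sqrt

lemma mul_inv_mul_eq_one_of_mul_self_eq {n R : Type*} [Fintype n] [DecidableEq n] [CommRing R]
    {S A : Matrix n n R} (hA : IsUnit A) (hS : S * S = A) : S * A⁻¹ * S = 1 := by
  have hSdet : IsUnit S.det :=
    (isUnit_iff_isUnit_det S).mp (isUnit_of_mul_isUnit_left (hS ▸ hA : IsUnit (S * S)))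
  rw [← hS, Matrix.mul_inv_rev, ← Matrix.mul_assoc, mul_nonsing_inv S hSdet, Matrix.one_mul,
    nonsing_inv_mul S hSdet]

lemma PosSemidef.smul_one_sub_mul_mul_of_smul_inv_sub {n R : Type*} [Fintype n] [DecidableEq n]
    [CommRing R] [PartialOrder R] [StarRing R] [TrivialStar R] {H V T : Matrix n n R} {c : R}
    (hH : IsUnit H) (hT : Tᵀ = T) (hTT : T * T = H) (hV : (c • H⁻¹ - V).PosSemidef) :
    (c • 1 - T * V * T).PosSemidef := by
  have hconj : T * (c • H⁻¹ - V) * Tᴴ = c • 1 - T * V * T := by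
    rw [conjTranspose_eq_transpose_of_trivial, hT, Matrix.mul_sub, Matrix.sub_mul,
      Matrix.mul_smul, Matrix.smul_mul, mul_inv_mul_eq_one_of_mul_self_eq hH hTT]
  exact hconj ▸ hV.mul_mul_conjTranspose_same T

lemma mulVec_dotProduct_mulVec_self {m n R : Type*} [Fintype m] [Fintype n] [CommSemiring R]
    (A : Matrix m n R) (x : n → R) : A *ᵥ x ⬝ᵥ A *ᵥ x = x ⬝ᵥ (Aᵀ * A) *ᵥ x := by
  rw [← mulVec_mulVec, dotProduct_transpose_mulVec]

lemma PosSemidef.dotProduct_mulVec_le {n R : Type*} [Fintype n] [DecidableEq n] [CommRing R]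
    [PartialOrder R] [IsOrderedRing R] [StarRing R] [TrivialStar R] {A : Matrix n n R} {c : R}
    (hA : (c • 1 - A).PosSemidef) (x : n → R) : x ⬝ᵥ A *ᵥ x ≤ c * (x ⬝ᵥ x) := by
  simpa only [star_trivial, sub_mulVec, smul_mulVec, one_mulVec, dotProduct_sub, dotProduct_smul,
    smul_eq_mul, sub_nonneg] using hA.dotProduct_mulVec_nonneg x

section LinearOrderedCommRing

variable {m n R : Type*} [Fintype m] [Fintype n] [CommRing R] [LinearOrder R] [IsStrictOrderedRing R]

lemma dotProduct_self_nonneg (v : n → R) : 0 ≤ v ⬝ᵥ v :=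
  Finset.sum_nonneg fun i _ => mul_self_nonneg (v i)

lemma dotProduct_sq_le_dotProduct_self_mul (x y : n → R) :
    (x ⬝ᵥ y) ^ 2 ≤ (x ⬝ᵥ x) * (y ⬝ᵥ y) := by
  simpa [dotProduct, sq] using Finset.sum_mul_sq_le_sq_mul_sq Finset.univ x y

lemma mulVec_dotProduct_mulVec_le_of_transpose {A : Matrix m n R} {c : R}
    (hc : 0 ≤ c) (hA : ∀ x, Aᵀ *ᵥ x ⬝ᵥ Aᵀ *ᵥ x ≤ c * (x ⬝ᵥ x)) (y : n → R) :
    A *ᵥ y ⬝ᵥ A *ᵥ y ≤ c * (y ⬝ᵥ y) := by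
  set u := A *ᵥ y
  have hu : 0 ≤ u ⬝ᵥ u := dotProduct_self_nonneg u
  have hy : 0 ≤ y ⬝ᵥ y := dotProduct_self_nonneg y
  have key : (u ⬝ᵥ u) ^ 2 ≤ (u ⬝ᵥ u) * (c * (y ⬝ᵥ y)) :=
    calc (u ⬝ᵥ u) ^ 2 = (y ⬝ᵥ Aᵀ *ᵥ u) ^ 2 := by rw [dotProduct_transpose_mulVec]
      _ ≤ (y ⬝ᵥ y) * (Aᵀ *ᵥ u ⬝ᵥ Aᵀ *ᵥ u) := dotProduct_sq_le_dotProduct_self_mul _ _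
      _ ≤ (y ⬝ᵥ y) * (c * (u ⬝ᵥ u)) := mul_le_mul_of_nonneg_left (hA u) hy
      _ = (u ⬝ᵥ u) * (c * (y ⬝ᵥ y)) := by ring
  rcases hu.eq_or_lt with hu0 | hu0
  · rw [← hu0]
    exact mul_nonneg hc hy
  · exact le_of_mul_le_mul_left (by rwa [sq] at key) hu0

lemma IsSymm.mulVec_dotProduct_mulVec_le_of_isIdempotentElem {Q : Matrix n n R}
    (hQsymm : Q.IsSymm) (hQidem : IsIdempotentElem Q) (v : n → R) :
    Q *ᵥ v ⬝ᵥ Q *ᵥ v ≤ v ⬝ᵥ v := by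
  have hQv : Q *ᵥ v ⬝ᵥ Q *ᵥ v = v ⬝ᵥ Q *ᵥ v := by
    rw [mulVec_dotProduct_mulVec_self, hQsymm.eq, hQidem.eq]
  have hres := dotProduct_self_nonneg (v - Q *ᵥ v)
  simp only [sub_dotProduct, dotProduct_sub, dotProduct_comm (Q *ᵥ v) v, hQv] at hres
  linarith

lemma mulVec_dotProduct_mulVec_le_of_posSemidef [DecidableEq m] [StarRing R] [TrivialStar R]
    {A : Matrix m n R} {c : R} (hc : 0 ≤ c) (hA : (c • 1 - A * Aᵀ).PosSemidef) (y : n → R) :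
    A *ᵥ y ⬝ᵥ A *ᵥ y ≤ c * (y ⬝ᵥ y) := by
  refine mulVec_dotProduct_mulVec_le_of_transpose hc (fun x => ?_) y
  rw [mulVec_dotProduct_mulVec_self, transpose_transpose]
  exact hA.dotProduct_mulVec_le x

end LinearOrderedCommRing

end Matrix

theorem projected_quadratic_form_le_general (n : ℕ)
    (V H : Matrix (Fin n) (Fin n) ℝ) (hV : V.PosDef) (hH : H.PosDef)
    (α : ℝ) (hα : 0 ≤ α ∧ α ≤ 1 / 10000)
    (hhigh : ((1 + α) • H⁻¹ - V).PosSemidef)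
    (P : Matrix (Fin n) (Fin n) ℝ)
    (hPsymm : (1 - P).IsHermitian) (hPidem : (1 - P) * (1 - P) = 1 - P)
    (h : Fin n → ℝ) :
    h ⬝ᵥ (hV.posSemidef.sqrt * (1 - P) * hV.posSemidef.sqrt * H *
        hV.posSemidef.sqrt * (1 - P) * hV.posSemidef.sqrt) *ᵥ h ≤
      2 * (h ⬝ᵥ V *ᵥ h) := by
  obtain ⟨hα0, hα1⟩ := hα
  set S := hV.posSemidef.sqrt
  set T := hH.posSemidef.sqrt
  have hSS : S * S = V := hV.posSemidef.sqrt_mul_self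
  have hTT : T * T = H := hH.posSemidef.sqrt_mul_self
  have hS : Sᵀ = S := (isHermitian_iff_isSymm.mp hV.posSemidef.isHermitian_sqrt).eq
  have hT : Tᵀ = T := (isHermitian_iff_isSymm.mp hH.posSemidef.isHermitian_sqrt).eq
  have hQ : (1 - P).IsSymm := isHermitian_iff_isSymm.mp hPsymm
  have hTVT : T * S * (T * S)ᵀ = T * V * T := by
    simp only [transpose_mul, hS, hT, ← hSS, Matrix.mul_assoc]
  have hTS := mulVec_dotProduct_mulVec_le_of_posSemidef (by linarith)
    (hTVT ▸ hhigh.smul_one_sub_mul_mul_of_smul_inv_sub hH.isUnit hT hTT)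
  have hSh : S *ᵥ h ⬝ᵥ S *ᵥ h = h ⬝ᵥ V *ᵥ h := by
    rw [mulVec_dotProduct_mulVec_self, hS, hSS]
  have hV0 : 0 ≤ h ⬝ᵥ V *ᵥ h := hSh ▸ dotProduct_self_nonneg (S *ᵥ h)
  calc _ = (T * S) *ᵥ ((1 - P) *ᵥ (S *ᵥ h)) ⬝ᵥ (T * S) *ᵥ ((1 - P) *ᵥ (S *ᵥ h)) := by
        simp only [mulVec_dotProduct_mulVec_self, mulVec_mulVec, transpose_mul, hS, hT, hQ.eq,
          ← hTT, Matrix.mul_assoc]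
    _ ≤ (1 + α) * ((1 - P) *ᵥ (S *ᵥ h) ⬝ᵥ (1 - P) *ᵥ (S *ᵥ h)) := hTS _
    _ ≤ (1 + α) * (S *ᵥ h ⬝ᵥ S *ᵥ h) := by
        gcongr
        exact hQ.mulVec_dotProduct_mulVec_le_of_isIdempotentElem hPidem _
    _ ≤ 2 * (h ⬝ᵥ V *ᵥ h) := by
        rw [hSh]
        nlinarith

/-- If `V, H` are symmetric positive definite with `(1−α)H⁻¹ ⪯ V ⪯ (1+α)H⁻¹` for
`0 ≤ α ≤ 1/10000`, and `I − P̃` is an orthogonal projection, then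
`hᵀ V^{1/2}(I−P̃)V^{1/2} H V^{1/2}(I−P̃)V^{1/2} h ≤ 2 hᵀ V h`. -/
theorem projected_quadratic_form_le (n : ℕ)
    (V H : Matrix (Fin n) (Fin n) ℝ) (hV : V.PosDef) (hH : H.PosDef)
    (α : ℝ) (hα : 0 ≤ α ∧ α ≤ 1 / 10000)
    (hlow : (V - (1 - α) • H⁻¹).PosSemidef)
    (hhigh : ((1 + α) • H⁻¹ - V).PosSemidef)
    (P : Matrix (Fin n) (Fin n) ℝ)
    (hPsymm : (1 - P).IsHermitian) (hPidem : (1 - P) * (1 - P) = 1 - P)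
    (h : Fin n → ℝ) :
    h ⬝ᵥ (hV.posSemidef.sqrt * (1 - P) * hV.posSemidef.sqrt * H *
        hV.posSemidef.sqrt * (1 - P) * hV.posSemidef.sqrt) *ᵥ h ≤
      2 * (h ⬝ᵥ V *ᵥ h) :=
  projected_quadratic_form_le_general n V H hV hH α hα hhigh P hPsymm hPidem h
end
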